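/- For real matrices A and B of the same shape n × m, the trace norm of the Hadamard product satisfies ‖A ∘ B‖_tr ≤ μ(A)² · ‖A‖_tr · ‖B‖_tr, where μ(A) is the coherence of A. -/

import Mathlib

open Matrix

/-- The singular values of a real matrix: square roots of the eigenvalues of `Aᵀ * A`. -/
noncomputable def singularValues {n d : ℕ} (A : Matrix (Fin n) (Fin d) ℝ) : Fin d → ℝ :=
  fun i => Real.sqrt ((show (Aᵀ * A).IsHermitian by simpa using Matrix.isHermitian_conjTranspose_mul_self A).eigenvalues i)

/-- The trace (nuclear) norm: sum of singular values. -/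
noncomputable def traceNorm {n d : ℕ} (A : Matrix (Fin n) (Fin d) ℝ) : ℝ :=
  ∑ i, singularValues A i

/-!
Trace-norm duality: `‖X‖_tr = max {tr (Wᵀ X) : ‖W‖₂ ≤ 1}`, the maximum being attained by the
partial isometry of the polar decomposition of `X`. Take such a `W` for `X = A ∘ B` and expand
`A = ∑ₗ σₗ uₗ vₗᵀ`: then `tr (Wᵀ (A ∘ B)) = ∑ₗ σₗ tr ((D(uₗ) W D(vₗ))ᵀ B)`, where `D` builds a
diagonal matrix. Every entry of `U` or `V` is at most its row norm, so
`‖D(uₗ) W D(vₗ)‖₂ ≤ max |uₗ| · max |vₗ| ≤ μ(A)²` and duality bounds each trace by `μ(A)² ‖B‖_tr`.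
Duality once more, with `W = U Vᵀ`, gives `∑ₗ σₗ ≤ ‖A‖_tr`.
-/

open scoped Matrix.Norms.L2Operator InnerProductSpace

section RealMatrix

variable {m n : Type*} [Fintype m] [Fintype n] [DecidableEq n]

lemma l2_opNorm_diagonal_le {v : n → ℝ} {c : ℝ} (hc : 0 ≤ c) (hv : ∀ i, |v i| ≤ c) :
    ‖diagonal v‖ ≤ c := by
  rw [l2_opNorm_diagonal]
  exact (pi_norm_le_iff_of_nonneg hc).mpr hv

lemma l2_opNorm_le_one_of_norm_transpose_mul_self_le_one {C : Matrix m n ℝ}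
    (h : ‖Cᵀ * C‖ ≤ 1) : ‖C‖ ≤ 1 := by
  rw [← conjTranspose_eq_transpose_of_trivial, l2_opNorm_conjTranspose_mul_self] at h
  nlinarith [norm_nonneg C]

lemma l2_opNorm_le_one_of_transpose_mul_self_eq_one {Q : Matrix m n ℝ}
    (hQ : Qᵀ * Q = 1) : ‖Q‖ ≤ 1 :=
  l2_opNorm_le_one_of_norm_transpose_mul_self_le_one <| by
    rw [hQ, ← diagonal_one]; exact l2_opNorm_diagonal_le zero_le_one fun _ => by simp

lemma l2_opNorm_diagonal_mul_mul_diagonal_le [DecidableEq m] {u : m → ℝ} {v : n → ℝ} {a b : ℝ}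
    (ha : 0 ≤ a) (hb : 0 ≤ b) (hu : ∀ i, |u i| ≤ a) (hv : ∀ j, |v j| ≤ b) (W : Matrix m n ℝ) :
    ‖diagonal u * W * diagonal v‖ ≤ a * ‖W‖ * b :=
  calc ‖diagonal u * W * diagonal v‖ ≤ ‖diagonal u‖ * ‖W‖ * ‖diagonal v‖ :=
        (l2_opNorm_mul _ _).trans (by gcongr; exact l2_opNorm_mul _ _)
    _ ≤ a * ‖W‖ * b := by
        gcongr
        exacts [l2_opNorm_diagonal_le ha hu, l2_opNorm_diagonal_le hb hv]

lemma inner_toEuclideanLin_toEuclideanLin (W M : Matrix m n ℝ) (x y : EuclideanSpace ℝ n) :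
    ⟪toEuclideanLin W x, toEuclideanLin M y⟫_ℝ = ⟪x, toEuclideanLin (Wᵀ * M) y⟫_ℝ := by
  simp only [EuclideanSpace.inner_eq_star_dotProduct, star_trivial, toLpLin_apply,
    ← mulVec_mulVec, dotProduct_mulVec, mulVec_transpose]

lemma trace_eq_sum_inner_toEuclideanLin (X : Matrix n n ℝ)
    (b : OrthonormalBasis n ℝ (EuclideanSpace ℝ n)) :
    X.trace = ∑ i, ⟪b i, toEuclideanLin X (b i)⟫_ℝ := by
  rw [← LinearMap.trace_eq_sum_inner (toEuclideanLin X) b, toEuclideanLin, toLpLin_eq_toLin,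
    trace_toLin_eq]

lemma norm_toEuclideanLin_eigenvectorBasis (M : Matrix m n ℝ) (hG : (Mᵀ * M).IsHermitian)
    (i : n) : ‖toEuclideanLin M (hG.eigenvectorBasis i)‖ = √(hG.eigenvalues i) := by
  have hq : toEuclideanLin (Mᵀ * M) (hG.eigenvectorBasis i) =
      hG.eigenvalues i • hG.eigenvectorBasis i := by
    rw [toLpLin_apply, hG.mulVec_eigenvectorBasis]; rfl
  rw [← Real.sqrt_sq (norm_nonneg _), ← real_inner_self_eq_norm_sq,
    inner_toEuclideanLin_toEuclideanLin, hq, real_inner_smul_right, real_inner_self_eq_norm_sq,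
    hG.eigenvectorBasis.norm_eq_one, one_pow, mul_one]

end RealMatrix

lemma traceNorm_nonneg {n d : ℕ} (M : Matrix (Fin n) (Fin d) ℝ) : 0 ≤ traceNorm M :=
  Finset.sum_nonneg fun _ _ => Real.sqrt_nonneg _

lemma traceNorm_eq_sum_norm_toEuclideanLin {n d : ℕ} (M : Matrix (Fin n) (Fin d) ℝ)
    (hG : (Mᵀ * M).IsHermitian) :
    traceNorm M = ∑ i, ‖toEuclideanLin M (hG.eigenvectorBasis i)‖ := by
  simp only [norm_toEuclideanLin_eigenvectorBasis]
  rfl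

lemma trace_transpose_mul_le_mul_traceNorm {n d : ℕ} (W M : Matrix (Fin n) (Fin d) ℝ) :
    trace (Wᵀ * M) ≤ ‖W‖ * traceNorm M := by
  have hG : (Mᵀ * M).IsHermitian := by simpa using isHermitian_conjTranspose_mul_self M
  set q := hG.eigenvectorBasis
  rw [trace_eq_sum_inner_toEuclideanLin _ q, traceNorm_eq_sum_norm_toEuclideanLin M hG,
    Finset.mul_sum]
  refine Finset.sum_le_sum fun i _ => ?_
  calc ⟪q i, toEuclideanLin (Wᵀ * M) (q i)⟫_ℝ
      = ⟪toEuclideanLin W (q i), toEuclideanLin M (q i)⟫_ℝ :=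
        (inner_toEuclideanLin_toEuclideanLin ..).symm
    _ ≤ ‖toEuclideanLin W (q i)‖ * ‖toEuclideanLin M (q i)‖ := real_inner_le_norm _ _
    _ ≤ ‖W‖ * ‖toEuclideanLin M (q i)‖ := by
      gcongr
      exact (l2_opNorm_mulVec W (q i)).trans_eq (by rw [q.norm_eq_one, mul_one])

lemma exists_l2_opNorm_le_one_trace_transpose_mul_eq_traceNorm {n d : ℕ}
    (M : Matrix (Fin n) (Fin d) ℝ) :
    ∃ W : Matrix (Fin n) (Fin d) ℝ, ‖W‖ ≤ 1 ∧ trace (Wᵀ * M) = traceNorm M := by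
  have hG : (Mᵀ * M).IsHermitian := by simpa using isHermitian_conjTranspose_mul_self M
  set Q : Matrix (Fin d) (Fin d) ℝ := (hG.eigenvectorUnitary : Matrix (Fin d) (Fin d) ℝ)
  set s : Fin d → ℝ := fun i => √(hG.eigenvalues i)
  have hQ : Qᵀ * Q = 1 := by
    simpa [Q, star_eq_conjTranspose] using Unitary.coe_star_mul_self hG.eigenvectorUnitary
  have hdiag : Qᵀ * (Mᵀ * M) * Q = diagonal hG.eigenvalues := by
    simpa [Q, star_eq_conjTranspose] using hG.conjStarAlgAut_star_eigenvectorUnitary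
  have hnonneg : ∀ i, 0 ≤ hG.eigenvalues i := by
    simpa using (posSemidef_conjTranspose_mul_self M).eigenvalues_nonneg
  -- `C * Qᵀ` sends the eigenvector `qᵢ` of `Mᵀ * M` to `M qᵢ / ‖M qᵢ‖`, or to `0` when `M qᵢ = 0`
  -- (as `0⁻¹ = 0`): the partial isometry of the polar decomposition of `M`.
  set C := M * Q * diagonal s⁻¹
  have hC : Cᵀ * C = diagonal (s⁻¹ * hG.eigenvalues * s⁻¹) := by
    calc Cᵀ * C = diagonal s⁻¹ * (Qᵀ * (Mᵀ * M) * Q) * diagonal s⁻¹ := by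
          simp only [C, transpose_mul, diagonal_transpose, Matrix.mul_assoc]
      _ = _ := by rw [hdiag, diagonal_mul_diagonal, diagonal_mul_diagonal]; rfl
  refine ⟨C * Qᵀ, ?_, ?_⟩
  · have hCnorm : ‖C‖ ≤ 1 := l2_opNorm_le_one_of_norm_transpose_mul_self_le_one <| hC ▸
      l2_opNorm_diagonal_le zero_le_one fun i => by
        have hsq : (s⁻¹ * hG.eigenvalues * s⁻¹) i = (s i * (s i)⁻¹) ^ 2 := by
          simp only [Pi.mul_apply, Pi.inv_apply, s]
          rw [mul_pow, Real.sq_sqrt (hnonneg i)]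
          ring
        rw [hsq, abs_of_nonneg (sq_nonneg _)]
        exact pow_le_one₀ (by positivity) mul_inv_le_one
    calc ‖C * Qᵀ‖ ≤ ‖C‖ * ‖Qᵀ‖ := l2_opNorm_mul _ _
      _ ≤ 1 * 1 := by
        gcongr
        exact l2_opNorm_le_one_of_transpose_mul_self_eq_one (by simpa using mul_eq_one_comm.mp hQ)
      _ = 1 := one_mul 1
  · calc trace ((C * Qᵀ)ᵀ * M) = trace (diagonal s⁻¹ * (Qᵀ * (Mᵀ * M) * Q)) := by
          simp only [C, transpose_mul, transpose_transpose, diagonal_transpose, Matrix.mul_assoc]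
          rw [trace_mul_comm]
          simp only [Matrix.mul_assoc]
      _ = ∑ i, s i := by
          rw [hdiag, diagonal_mul_diagonal, trace_diagonal]
          refine Finset.sum_congr rfl fun i _ => ?_
          simp only [Pi.inv_apply, s, inv_mul_eq_div, Real.div_sqrt]

lemma sum_le_traceNorm_of_eq_mul_diagonal_mul {n m k : ℕ} {A : Matrix (Fin n) (Fin m) ℝ}
    {U : Matrix (Fin n) (Fin k) ℝ} {V : Matrix (Fin m) (Fin k) ℝ} {σ : Fin k → ℝ}
    (hU : Uᵀ * U = 1) (hV : Vᵀ * V = 1) (hA : A = U * diagonal σ * Vᵀ) :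
    ∑ l, σ l ≤ traceNorm A := by
  have htrace : trace ((U * Vᵀ)ᵀ * A) = ∑ l, σ l := by
    calc trace ((U * Vᵀ)ᵀ * A) = trace (Uᵀ * U * diagonal σ * (Vᵀ * V)) := by
          rw [hA, transpose_mul, transpose_transpose, Matrix.mul_assoc V, trace_mul_comm V]
          simp only [Matrix.mul_assoc]
      _ = ∑ l, σ l := by rw [hU, hV, Matrix.one_mul, Matrix.mul_one, trace_diagonal]
  have hnorm : ‖U * Vᵀ‖ ≤ 1 :=
    calc ‖U * Vᵀ‖ ≤ ‖U‖ * ‖V‖ := by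
          simpa [← conjTranspose_eq_transpose_of_trivial, l2_opNorm_conjTranspose] using
            l2_opNorm_mul U Vᵀ
      _ ≤ 1 * 1 := by
          gcongr <;> exact l2_opNorm_le_one_of_transpose_mul_self_eq_one ‹_›
      _ = 1 := one_mul 1
  calc ∑ l, σ l = trace ((U * Vᵀ)ᵀ * A) := htrace.symm
    _ ≤ ‖U * Vᵀ‖ * traceNorm A := trace_transpose_mul_le_mul_traceNorm _ _
    _ ≤ traceNorm A := mul_le_of_le_one_left (traceNorm_nonneg A) hnorm

lemma trace_transpose_mul_hadamard_mul_diagonal_mul {R m n k : Type*} [CommSemiring R]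
    [Fintype m] [Fintype n] [Fintype k] [DecidableEq m] [DecidableEq n] [DecidableEq k]
    (W B : Matrix m n R) (U : Matrix m k R) (V : Matrix n k R) (σ : k → R) :
    trace (Wᵀ * ((U * diagonal σ * Vᵀ) ⊙ B)) =
      ∑ l, σ l * trace ((diagonal (fun i => U i l) * W * diagonal (fun j => V j l))ᵀ * B) := by
  have htrace : ∀ X Y : Matrix m n R, trace (Xᵀ * Y) = ∑ i, ∑ j, X i j * Y i j := fun X Y => by
    simp only [trace, diag, mul_apply, transpose_apply]
    exact Finset.sum_comm
  have hA : ∀ i j, (U * diagonal σ * Vᵀ) i j = ∑ l, U i l * σ l * V j l := fun i j => by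
    rw [mul_apply]
    simp only [mul_diagonal, transpose_apply]
  simp only [htrace, hadamard_apply, mul_diagonal, diagonal_mul, hA, Finset.sum_mul, Finset.mul_sum]
  rw [Finset.sum_comm_cycle]
  refine Fintype.sum_congr _ _ fun l => Fintype.sum_congr _ _ fun i =>
    Fintype.sum_congr _ _ fun j => ?_
  ring

lemma abs_apply_le_iSup_sqrt_sum_sq {m k : Type*} [Finite m] [Fintype k] (U : Matrix m k ℝ)
    (i : m) (l : k) : |U i l| ≤ ⨆ i, √(∑ l, U i l ^ 2) :=
  calc |U i l| = √(U i l ^ 2) := (Real.sqrt_sq_eq_abs _).symm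
    _ ≤ √(∑ l, U i l ^ 2) :=
      Real.sqrt_le_sqrt (Finset.single_le_sum (fun _ _ => sq_nonneg _) (Finset.mem_univ l))
    _ ≤ ⨆ i, √(∑ l, U i l ^ 2) :=
      le_ciSup (f := fun i => √(∑ l, U i l ^ 2)) (Set.finite_range _).bddAbove i

/-- Lemma 3: `‖A ∘ B‖_tr ≤ μ(A)² ‖A‖_tr ‖B‖_tr`, where `μ(A)` is the coherence computed
from an SVD `A = U Σ Vᵀ` of `A` (`U, V` with orthonormal columns, `Σ = diag σ`, `σ ≥ 0`). -/
theorem traceNorm_hadamard_le {n m k : ℕ} (A B : Matrix (Fin n) (Fin m) ℝ)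
    (U : Matrix (Fin n) (Fin k) ℝ) (V : Matrix (Fin m) (Fin k) ℝ) (σ : Fin k → ℝ)
    (hU : Uᵀ * U = 1) (hV : Vᵀ * V = 1) (hσ : ∀ i, 0 ≤ σ i)
    (hSVD : A = U * Matrix.diagonal σ * Vᵀ) :
    let μA : ℝ := max (⨆ i : Fin n, Real.sqrt (∑ l, (U i l) ^ 2))
                      (⨆ j : Fin m, Real.sqrt (∑ l, (V j l) ^ 2))
    traceNorm (A ⊙ B) ≤ μA ^ 2 * traceNorm A * traceNorm B := by
  intro μA
  have hμ : 0 ≤ μA := (Real.iSup_nonneg fun _ => Real.sqrt_nonneg _).trans (le_max_left _ _)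
  have hB : 0 ≤ traceNorm B := traceNorm_nonneg B
  obtain ⟨W, hW, hWA⟩ := exists_l2_opNorm_le_one_trace_transpose_mul_eq_traceNorm (A ⊙ B)
  have hterm : ∀ l, trace ((diagonal (fun i => U i l) * W * diagonal (fun j => V j l))ᵀ * B) ≤
      μA ^ 2 * traceNorm B := fun l =>
    calc _ ≤ ‖diagonal (fun i => U i l) * W * diagonal (fun j => V j l)‖ * traceNorm B :=
          trace_transpose_mul_le_mul_traceNorm _ _
      _ ≤ μA * ‖W‖ * μA * traceNorm B := by
          gcongr
          exact l2_opNorm_diagonal_mul_mul_diagonal_le hμ hμ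
            (fun i => (abs_apply_le_iSup_sqrt_sum_sq U i l).trans (le_max_left _ _))
            (fun j => (abs_apply_le_iSup_sqrt_sum_sq V j l).trans (le_max_right _ _)) W
      _ ≤ μA * 1 * μA * traceNorm B := by gcongr
      _ = μA ^ 2 * traceNorm B := by ring
  calc traceNorm (A ⊙ B)
      = ∑ l, σ l * trace ((diagonal (fun i => U i l) * W * diagonal (fun j => V j l))ᵀ * B) := by
        rw [← hWA, hSVD, trace_transpose_mul_hadamard_mul_diagonal_mul]
    _ ≤ ∑ l, σ l * (μA ^ 2 * traceNorm B) :=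
        Finset.sum_le_sum fun l _ => mul_le_mul_of_nonneg_left (hterm l) (hσ l)
    _ = μA ^ 2 * (∑ l, σ l) * traceNorm B := by rw [← Finset.sum_mul]; ring
    _ ≤ μA ^ 2 * traceNorm A * traceNorm B := by
        gcongr
        exact sum_le_traceNorm_of_eq_mul_diagonal_mul hU hV hSVD
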